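/- Let k ≥ 1 be an integer and let G be an edge-colored graph containing no triangle (no cycle of length 3), with average color degree d̂(G) ≥ 2k. Then G contains a rainbow matching of size k. -/

import Mathlib

/-- The color degree of a vertex `v`: the number of distinct colors appearing
on edges of `G` incident to `v`. -/
noncomputable def colorDegree {V : Type*} (G : SimpleGraph V) (c : Sym2 V → ℕ) (v : V) : ℕ :=
  (c '' {e : Sym2 V | e ∈ G.edgeSet ∧ v ∈ e}).ncard

/-- `M` is a rainbow matching in the edge-colored graph `(G, c)`:
a set of edges of `G`, pairwise vertex-disjoint, with pairwise distinct colors. -/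
def IsRainbowMatching {V : Type*} (G : SimpleGraph V) (c : Sym2 V → ℕ)
    (M : Finset (Sym2 V)) : Prop :=
  ↑M ⊆ G.edgeSet ∧
  (∀ e ∈ M, ∀ f ∈ M, e ≠ f → ∀ v : V, v ∈ e → v ∉ f) ∧
  Set.InjOn c ↑M

/-!
Fix a maximum rainbow matching `M` with `m = |M|`; we show `∑ v, d̂(v) ≤ 2m|V|`.
By triangle-freeness a vertex has at most one neighbour on each edge of `M`, so it sees at most
`m` colors towards matched vertices besides its `freeColors` (those towards unmatched vertices).
For unmatched `w` these lie in `c(M)` by maximality, so `d̂(w) ≤ 2m` minus the number of edges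
`e ∈ M` with `w ∈ blocked e`.
For `uv ∈ M`, all colors of `newColors u v` and `newColors v u` coincide, or `M - uv` plus two
edges would be a larger rainbow matching. So these two sets have at most two elements in total,
unless one of them has at least three; then the same exchange argument, applied to `M - uv + vw`,
shows that every unmatched neighbour `w` of `v` realising one of these colors is blocked by `uv`.
Hence `d̂(u) + d̂(v) ≤ 4m + |blocked uv|`, and in the sum over all vertices the blocked terms
cancel.
-/

section

open Finset

variable {V : Type*} {G : SimpleGraph V} {c : Sym2 V → ℕ} {M N : Finset (Sym2 V)}
  {e : Sym2 V} {u v w x y : V}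

theorem Set.exists_ne_ne_of_three_le_ncard {α : Type*} {s : Set α} (h : 3 ≤ s.ncard)
    (a b : α) : ∃ p ∈ s, p ≠ a ∧ p ≠ b := by
  by_contra! hab
  have hsub : s ⊆ {a, b} := fun p hp => by
    by_cases hpa : p = a
    · exact Or.inl hpa
    · exact Or.inr (hab p hp hpa)
  have := (Set.ncard_le_ncard hsub (Set.toFinite _)).trans (Set.ncard_insert_le _ _)
  rw [Set.ncard_singleton] at this
  omega

theorem SimpleGraph.incidenceSet_eq_image_neighborSet (G : SimpleGraph V) (v : V) :
    G.incidenceSet v = (fun x => s(v, x)) '' G.neighborSet v := by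
  ext e
  induction e using Sym2.ind with
  | _ a b =>
    simp only [SimpleGraph.incidenceSet, Set.mem_ofPred_eq, SimpleGraph.mem_edgeSet,
      Set.mem_image, SimpleGraph.mem_neighborSet, Sym2.eq_iff, Sym2.mem_iff]
    constructor
    · rintro ⟨hab, rfl | rfl⟩
      · exact ⟨b, hab, by simp⟩
      · exact ⟨a, hab.symm, by simp⟩
    · rintro ⟨x, hvx, ⟨rfl, rfl⟩ | ⟨rfl, rfl⟩⟩
      · exact ⟨hvx, Or.inl rfl⟩
      · exact ⟨hvx.symm, Or.inr rfl⟩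

theorem colorDegree_eq_ncard_image_neighborSet (G : SimpleGraph V) (c : Sym2 V → ℕ) (v : V) :
    colorDegree G c v = ((fun x => c s(v, x)) '' G.neighborSet v).ncard := by
  rw [colorDegree, ← SimpleGraph.incidenceSet, G.incidenceSet_eq_image_neighborSet,
    Set.image_image]

theorem IsRainbowMatching.mono (hM : IsRainbowMatching G c M) (h : N ⊆ M) :
    IsRainbowMatching G c N :=
  ⟨(coe_subset.2 h).trans hM.1, fun e he f hf => hM.2.1 e (h he) f (h hf),
    hM.2.2.mono (coe_subset.2 h)⟩

def IsMaxRainbowMatching (G : SimpleGraph V) (c : Sym2 V → ℕ) (M : Finset (Sym2 V)) : Prop :=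
  IsRainbowMatching G c M ∧ ∀ N, IsRainbowMatching G c N → N.card ≤ M.card

theorem exists_isMaxRainbowMatching [Finite V] (G : SimpleGraph V) (c : Sym2 V → ℕ) :
    ∃ M, IsMaxRainbowMatching G c M := by
  classical
  have := Fintype.ofFinite V
  obtain ⟨M, hM, hmax⟩ := exists_max_image {N : Finset (Sym2 V) | IsRainbowMatching G c N} card
    ⟨∅, mem_filter.2 ⟨mem_univ _, by simp [IsRainbowMatching]⟩⟩
  exact ⟨M, (mem_filter.1 hM).2, fun N hN => hmax N (by simpa using hN)⟩

section Matching

variable [DecidableEq V]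

def matchedVerts (M : Finset (Sym2 V)) : Finset V := M.biUnion Sym2.toFinset

@[simp]
theorem mem_matchedVerts : v ∈ matchedVerts M ↔ ∃ e ∈ M, v ∈ e := by
  simp [matchedVerts]

theorem matchedVerts_mono (h : N ⊆ M) : matchedVerts N ⊆ matchedVerts M :=
  biUnion_subset_biUnion_of_subset_left _ h

theorem notMem_matchedVerts_insert :
    v ∉ matchedVerts (insert s(x, y) M) ↔ v ≠ x ∧ v ≠ y ∧ v ∉ matchedVerts M := by
  simp [Sym2.mem_iff, not_or, and_assoc]

theorem card_insert_of_notMem_matchedVerts (hx : x ∉ matchedVerts M) :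
    (insert s(x, y) M).card = M.card + 1 :=
  card_insert_of_notMem fun h => hx (mem_matchedVerts.2 ⟨_, h, Sym2.mem_mk_left x y⟩)

namespace IsRainbowMatching

theorem notMem_matchedVerts_erase (hM : IsRainbowMatching G c M) (he : e ∈ M) (hv : v ∈ e) :
    v ∉ matchedVerts (M.erase e) := by
  simp only [mem_matchedVerts, mem_erase, not_exists, not_and]
  exact fun f ⟨hfe, hf⟩ => hM.2.1 e he f hf (Ne.symm hfe) v hv

theorem insert (hM : IsRainbowMatching G c M) (hxy : G.Adj x y) (hx : x ∉ matchedVerts M)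
    (hy : y ∉ matchedVerts M) (hc : c s(x, y) ∉ c '' ↑M) :
    IsRainbowMatching G c (insert s(x, y) M) := by
  have hxyM : s(x, y) ∉ M := fun h => hc ⟨_, h, rfl⟩
  simp only [mem_matchedVerts, not_exists, not_and] at hx hy
  refine ⟨?_, ?_, ?_⟩
  · rw [coe_insert]
    exact Set.insert_subset hxy hM.1
  · simp only [mem_insert]
    rintro e (rfl | he) f (rfl | hf) hef z hze hzf
    · exact hef rfl
    · rcases Sym2.mem_iff.1 hze with rfl | rfl
      exacts [hx f hf hzf, hy f hf hzf]
    · rcases Sym2.mem_iff.1 hzf with rfl | rfl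
      exacts [hx e he hze, hy e he hze]
    · exact hM.2.1 e he f hf hef z hze hzf
  · rw [coe_insert, Set.injOn_insert (by exact_mod_cast hxyM)]
    exact ⟨hM.2.2, hc⟩

theorem sum_matchedVerts {β : Type*} [AddCommMonoid β]
    (hM : IsRainbowMatching G c M) (f : V → β) :
    ∑ v ∈ matchedVerts M, f v = ∑ e ∈ M, ∑ v ∈ e.toFinset, f v :=
  sum_biUnion fun e he f hf hef => disjoint_left.2 fun z hze hzf =>
    hM.2.1 e he f hf hef z (Sym2.mem_toFinset.1 hze) (Sym2.mem_toFinset.1 hzf)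

end IsRainbowMatching

theorem ncard_neighborSet_inter_matchedVerts_le (hC3 : G.CliqueFree 3) (hM : ↑M ⊆ G.edgeSet)
    (v : V) : (G.neighborSet v ∩ ↑(matchedVerts M)).ncard ≤ M.card := by
  have hcover : ∀ x ∈ G.neighborSet v ∩ ↑(matchedVerts M), ∃ e ∈ M, x ∈ e :=
    fun x hx => mem_matchedVerts.1 hx.2
  have : Nonempty (Sym2 V) := ⟨s(v, v)⟩
  choose! f hfM hxf using hcover
  refine (Set.ncard_le_ncard_of_injOn f hfM ?_ M.finite_toSet).trans (Set.ncard_coe_finset M).le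
  intro x hx y hy hxy
  by_contra hne
  have hedge : f x = s(x, y) := (Sym2.mem_and_mem_iff hne).1 ⟨hxf x hx, hxy ▸ hxf y hy⟩
  have hadj : G.Adj x y := G.mem_edgeSet.1 (hedge ▸ hM (hfM x hx))
  exact G.isIndepSet_neighborSet_of_triangleFree hC3 v hx.1 hy.1 hne hadj

def freeColors (G : SimpleGraph V) (c : Sym2 V → ℕ) (M : Finset (Sym2 V)) (v : V) : Set ℕ :=
  (fun x => c s(v, x)) '' (G.neighborSet v \ ↑(matchedVerts M))

theorem colorDegree_le_card_add_ncard_freeColors [Finite V] (hC3 : G.CliqueFree 3)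
    (hM : ↑M ⊆ G.edgeSet) (v : V) :
    colorDegree G c v ≤ M.card + (freeColors G c M v).ncard := by
  rw [colorDegree_eq_ncard_image_neighborSet,
    ← Set.inter_union_sdiff (G.neighborSet v) ↑(matchedVerts M), Set.image_union]
  exact (Set.ncard_union_le _ _).trans (Nat.add_le_add_right ((Set.ncard_image_le
    (Set.toFinite _)).trans (ncard_neighborSet_inter_matchedVerts_le hC3 hM v)) _)

def newColors (G : SimpleGraph V) (c : Sym2 V → ℕ) (M : Finset (Sym2 V)) (u v : V) : Set ℕ :=
  freeColors G c M v \ c '' ↑(M.erase s(u, v))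

theorem colorDegree_add_one_le_of_mem [Finite V] (hC3 : G.CliqueFree 3) (hM : ↑M ⊆ G.edgeSet)
    (huv : s(u, v) ∈ M) :
    colorDegree G c v + 1 ≤ 2 * M.card + (newColors G c M u v).ncard := by
  have hfree :
      (freeColors G c M v).ncard ≤ (M.erase s(u, v)).card + (newColors G c M u v).ncard :=
    calc (freeColors G c M v).ncard
        ≤ (c '' ↑(M.erase s(u, v)) ∪ newColors G c M u v).ncard :=
          Set.ncard_le_ncard (Set.sdiff_subset_iff.1 subset_rfl)
            ((Set.toFinite _).union (((Set.toFinite _).image _).sdiff))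
      _ ≤ (c '' ↑(M.erase s(u, v))).ncard + (newColors G c M u v).ncard :=
          Set.ncard_union_le _ _
      _ ≤ _ := Nat.add_le_add_right
          ((Set.ncard_image_le (Set.toFinite _)).trans (Set.ncard_coe_finset _).le) _
  have := colorDegree_le_card_add_ncard_freeColors (c := c) hC3 hM v
  have := card_erase_add_one huv
  omega

open Classical in
noncomputable def blocked [Fintype V] (G : SimpleGraph V) (c : Sym2 V → ℕ)
    (M : Finset (Sym2 V)) (e : Sym2 V) : Finset V :=
  {w | w ∉ matchedVerts M ∧ c e ∉ freeColors G c M w}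

theorem mem_blocked [Fintype V] :
    w ∈ blocked G c M e ↔ w ∉ matchedVerts M ∧ c e ∉ freeColors G c M w := by
  simp [blocked]

theorem sum_card_blocked [Fintype V] :
    ∑ e ∈ M, #(blocked G c M e) =
      ∑ w ∈ (matchedVerts M)ᶜ, #{e ∈ M | w ∈ blocked G c M e} := by
  refine (sum_congr rfl fun e _ => congrArg card ?_).trans
    (sum_card_bipartiteAbove_eq_sum_card_bipartiteBelow (t := (matchedVerts M)ᶜ)
      fun e w => w ∈ blocked G c M e)
  ext w
  simp only [bipartiteAbove, mem_filter, mem_compl, iff_and_self]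
  exact fun hw => (mem_blocked.1 hw).1

namespace IsMaxRainbowMatching

theorem color_mem_image (hM : IsMaxRainbowMatching G c M) (hxy : G.Adj x y)
    (hx : x ∉ matchedVerts M) (hy : y ∉ matchedVerts M) : c s(x, y) ∈ c '' ↑M := by
  by_contra hc
  have := hM.2 _ (hM.1.insert hxy hx hy hc)
  rw [card_insert_of_notMem_matchedVerts hx] at this
  omega

theorem freeColors_subset (hM : IsMaxRainbowMatching G c M) (hw : w ∉ matchedVerts M) :
    freeColors G c M w ⊆ c '' ↑M := by
  rintro _ ⟨x, ⟨hwx, hx⟩, rfl⟩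
  exact hM.color_mem_image hwx hw hx

theorem eq_of_mem_newColors (hC3 : G.CliqueFree 3) (hM : IsMaxRainbowMatching G c M)
    (huv : s(u, v) ∈ M) {p q : ℕ} (hp : p ∈ newColors G c M u v)
    (hq : q ∈ newColors G c M v u) : p = q := by
  obtain ⟨⟨x, ⟨hvx, hx⟩, rfl⟩, hpM⟩ := hp
  obtain ⟨⟨y, ⟨huy, hy⟩, rfl⟩, hqM⟩ := hq
  rw [Sym2.eq_swap] at hqM
  by_contra hpq
  have huv' : G.Adj u v := hM.1.1 huv
  have hu : u ∈ matchedVerts M := mem_matchedVerts.2 ⟨_, huv, Sym2.mem_mk_left u v⟩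
  have hv : v ∈ matchedVerts M := mem_matchedVerts.2 ⟨_, huv, Sym2.mem_mk_right u v⟩
  have hfree : ∀ z ∉ matchedVerts M, z ∉ matchedVerts (M.erase s(u, v)) := fun z hz h =>
    hz (matchedVerts_mono (erase_subset _ _) h)
  have hv₁ := hM.1.notMem_matchedVerts_erase huv (Sym2.mem_mk_right u v)
  have hM₂ := (hM.1.mono (erase_subset _ _)).insert hvx hv₁ (hfree x hx) hpM
  have hu₂ : u ∉ matchedVerts (insert s(v, x) (M.erase s(u, v))) :=
    notMem_matchedVerts_insert.2 ⟨huv'.ne, fun h => hx (h ▸ hu),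
      hM.1.notMem_matchedVerts_erase huv (Sym2.mem_mk_left u v)⟩
  have hxy : x ≠ y := by
    rintro rfl
    exact G.isIndepSet_neighborSet_of_triangleFree hC3 v huv'.symm hvx
      (fun h => hx (h ▸ hu)) huy
  have hy₂ : y ∉ matchedVerts (insert s(v, x) (M.erase s(u, v))) :=
    notMem_matchedVerts_insert.2 ⟨fun h => hy (h ▸ hv), hxy.symm, hfree y hy⟩
  have hM₃ := hM₂.insert huy hu₂ hy₂ (by
    rw [coe_insert, Set.image_insert_eq]
    rintro (h | h)
    exacts [hpq h.symm, hqM h])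
  have := hM.2 _ hM₃
  rw [card_insert_of_notMem_matchedVerts hu₂, card_insert_of_notMem_matchedVerts hv₁,
    card_erase_add_one huv] at this
  omega

theorem exchange (hM : IsMaxRainbowMatching G c M) (huv : s(u, v) ∈ M) (hvw : G.Adj v w)
    (hw : w ∉ matchedVerts M) (hc : c s(v, w) ∉ c '' ↑(M.erase s(u, v))) :
    IsMaxRainbowMatching G c (insert s(v, w) (M.erase s(u, v))) := by
  have hv₁ := hM.1.notMem_matchedVerts_erase huv (Sym2.mem_mk_right u v)
  refine ⟨(hM.1.mono (erase_subset _ _)).insert hvw hv₁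
    (fun h => hw (matchedVerts_mono (erase_subset _ _) h)) hc, fun N hN => ?_⟩
  rw [card_insert_of_notMem_matchedVerts hv₁, card_erase_add_one huv]
  exact hM.2 N hN

theorem mem_blocked_of_three_le (hC3 : G.CliqueFree 3) [Fintype V]
    (hM : IsMaxRainbowMatching G c M) (huv : s(u, v) ∈ M)
    (h3 : 3 ≤ (newColors G c M u v).ncard) (hvw : G.Adj v w) (hw : w ∉ matchedVerts M)
    (hc : c s(v, w) ∉ c '' ↑(M.erase s(u, v))) : w ∈ blocked G c M s(u, v) := by
  obtain ⟨p, hp, hpvw, hpuv⟩ := Set.exists_ne_ne_of_three_le_ncard h3 (c s(v, w)) (c s(u, v))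
  refine mem_blocked.2 ⟨hw, ?_⟩
  rintro ⟨x, ⟨hwx, hx⟩, hxuv⟩
  have hv : v ∈ matchedVerts M := mem_matchedVerts.2 ⟨_, huv, Sym2.mem_mk_right u v⟩
  -- In `M - uv + vw` the edge `wv` takes the role of `uv`: `p` is new at `v` and `c(uv)` at `w`.
  have hM' := hM.exchange huv hvw hw hc
  have hwv : s(w, v) ∈ insert s(v, w) (M.erase s(u, v)) := by
    rw [Sym2.eq_swap]
    exact mem_insert_self _ _
  have herase : (insert s(v, w) (M.erase s(u, v))).erase s(v, w) = M.erase s(u, v) :=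
    erase_insert fun h => hw (mem_matchedVerts.2 ⟨_, mem_of_mem_erase h, Sym2.mem_mk_right v w⟩)
  have hp' : p ∈ newColors G c (insert s(v, w) (M.erase s(u, v))) w v := by
    obtain ⟨⟨y, ⟨hvy, hy⟩, rfl⟩, hpM⟩ := hp
    refine ⟨⟨y, ⟨hvy, notMem_matchedVerts_insert.2 ⟨hvy.ne', ?_, ?_⟩⟩, rfl⟩, ?_⟩
    · rintro rfl
      exact hpvw rfl
    · exact fun h => hy (matchedVerts_mono (erase_subset _ _) h)
    · rwa [show s(w, v) = s(v, w) from Sym2.eq_swap, herase]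
  have hq' : c s(w, x) ∈ newColors G c (insert s(v, w) (M.erase s(u, v))) v w := by
    refine ⟨⟨x, ⟨hwx, notMem_matchedVerts_insert.2 ⟨fun h => hx (h ▸ hv), hwx.ne', ?_⟩⟩, rfl⟩,
      ?_⟩
    · exact fun h => hx (matchedVerts_mono (erase_subset _ _) h)
    · rw [herase, show c s(w, x) = c s(u, v) from hxuv]
      rintro ⟨f, hf, hcf⟩
      exact (mem_erase.1 hf).1 (hM.1.2.2 (mem_of_mem_erase hf) huv hcf)
  exact hpuv ((hM'.eq_of_mem_newColors hC3 hwv hp' hq').trans hxuv)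

theorem ncard_newColors_le_card_blocked (hC3 : G.CliqueFree 3) [Fintype V]
    (hM : IsMaxRainbowMatching G c M) (huv : s(u, v) ∈ M)
    (h3 : 3 ≤ (newColors G c M u v).ncard) :
    (newColors G c M u v).ncard ≤ (blocked G c M s(u, v)).card := by
  have hsub : newColors G c M u v ⊆ (fun x => c s(v, x)) '' ↑(blocked G c M s(u, v)) := by
    rintro _ ⟨⟨w, ⟨hvw, hw⟩, rfl⟩, hc⟩
    exact ⟨w, hM.mem_blocked_of_three_le hC3 huv h3 hvw hw hc, rfl⟩
  calc (newColors G c M u v).ncard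
      ≤ ((fun x => c s(v, x)) '' ↑(blocked G c M s(u, v))).ncard :=
        Set.ncard_le_ncard hsub (Set.toFinite _)
    _ ≤ (blocked G c M s(u, v)).card :=
        (Set.ncard_image_le (Set.toFinite _)).trans (Set.ncard_coe_finset _).le

theorem ncard_newColors_le_one (hC3 : G.CliqueFree 3) (hM : IsMaxRainbowMatching G c M)
    (huv : s(u, v) ∈ M) (h : (newColors G c M v u).Nonempty) :
    (newColors G c M u v).ncard ≤ 1 := by
  obtain ⟨q, hq⟩ := h
  calc (newColors G c M u v).ncard ≤ ({q} : Set ℕ).ncard :=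
        Set.ncard_le_ncard (fun p hp => hM.eq_of_mem_newColors hC3 huv hp hq) (Set.toFinite _)
    _ = 1 := Set.ncard_singleton q

theorem colorDegree_add_colorDegree_le (hC3 : G.CliqueFree 3) [Fintype V]
    (hM : IsMaxRainbowMatching G c M) (huv : s(u, v) ∈ M) :
    colorDegree G c u + colorDegree G c v ≤ 4 * M.card + (blocked G c M s(u, v)).card := by
  have hvu : s(v, u) ∈ M := Sym2.eq_swap ▸ huv
  have hu := colorDegree_add_one_le_of_mem (c := c) hC3 hM.1.1 hvu
  have hv := colorDegree_add_one_le_of_mem (c := c) hC3 hM.1.1 huv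
  have hab : (newColors G c M v u).ncard ≠ 0 → (newColors G c M u v).ncard ≤ 1 := fun h =>
    hM.ncard_newColors_le_one hC3 huv (Set.nonempty_of_ncard_ne_zero h)
  have hba : (newColors G c M u v).ncard ≠ 0 → (newColors G c M v u).ncard ≤ 1 := fun h =>
    hM.ncard_newColors_le_one hC3 hvu (Set.nonempty_of_ncard_ne_zero h)
  have hA := hM.ncard_newColors_le_card_blocked hC3 huv
  have hB := hM.ncard_newColors_le_card_blocked hC3 hvu
  rw [Sym2.eq_swap] at hB
  omega

theorem colorDegree_add_card_filter_blocked_le (hC3 : G.CliqueFree 3) [Fintype V]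
    (hM : IsMaxRainbowMatching G c M) (hw : w ∉ matchedVerts M) :
    colorDegree G c w + #{e ∈ M | w ∈ blocked G c M e} ≤ 2 * M.card := by
  have hsub : freeColors G c M w ⊆ c '' ↑{e ∈ M | w ∉ blocked G c M e} := by
    intro t ht
    obtain ⟨e, he, rfl⟩ := hM.freeColors_subset hw ht
    exact ⟨e, mem_coe.2 (mem_filter.2 ⟨he, fun hb => (mem_blocked.1 hb).2 ht⟩), rfl⟩
  have hfree : (freeColors G c M w).ncard ≤ #{e ∈ M | w ∉ blocked G c M e} :=
    (Set.ncard_le_ncard hsub (Set.toFinite _)).trans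
      ((Set.ncard_image_le (Set.toFinite _)).trans (Set.ncard_coe_finset _).le)
  have := colorDegree_le_card_add_ncard_freeColors (c := c) hC3 hM.1.1 w
  have := card_filter_add_card_filter_not (s := M) (fun e => w ∈ blocked G c M e)
  omega

theorem sum_colorDegree_le (hC3 : G.CliqueFree 3) [Fintype V]
    (hM : IsMaxRainbowMatching G c M) :
    ∑ v, colorDegree G c v ≤ 2 * M.card * Fintype.card V := by
  have hmatched : ∑ v ∈ matchedVerts M, colorDegree G c v
      ≤ ∑ v ∈ matchedVerts M, 2 * M.card + ∑ e ∈ M, #(blocked G c M e) := by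
    rw [hM.1.sum_matchedVerts, hM.1.sum_matchedVerts, ← sum_add_distrib]
    refine sum_le_sum fun e he => ?_
    induction e using Sym2.ind with
    | _ u v =>
      have huv : u ≠ v := (G.mem_edgeSet.1 (hM.1.1 he)).ne
      rw [Sym2.toFinset_mk_eq, sum_pair huv, sum_pair huv]
      linarith [hM.colorDegree_add_colorDegree_le hC3 he]
  have hfree : ∑ v ∈ (matchedVerts M)ᶜ, colorDegree G c v + ∑ e ∈ M, #(blocked G c M e)
      ≤ ∑ v ∈ (matchedVerts M)ᶜ, 2 * M.card := by
    rw [sum_card_blocked, ← sum_add_distrib]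
    exact sum_le_sum fun w hw => hM.colorDegree_add_card_filter_blocked_le hC3 (mem_compl.1 hw)
  calc ∑ v, colorDegree G c v
      = ∑ v ∈ matchedVerts M, colorDegree G c v
        + ∑ v ∈ (matchedVerts M)ᶜ, colorDegree G c v := (sum_add_sum_compl _ _).symm
    _ ≤ ∑ v ∈ matchedVerts M, 2 * M.card + ∑ v ∈ (matchedVerts M)ᶜ, 2 * M.card := by
        omega
    _ = 2 * M.card * Fintype.card V := by
        rw [sum_add_sum_compl, sum_const, card_univ, smul_eq_mul, mul_comm]

end IsMaxRainbowMatching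

end Matching

end

theorem rainbow_matching_triangle_free_avg_color_degree_general
    {V : Type*} [Fintype V] (k : ℕ)
    (G : SimpleGraph V) (c : Sym2 V → ℕ)
    (hC3 : G.CliqueFree 3)
    (havg : (2 * (k : ℚ)) ≤ (∑ v, (colorDegree G c v : ℚ)) / (Fintype.card V : ℚ)) :
    ∃ M : Finset (Sym2 V), IsRainbowMatching G c M ∧ M.card = k := by
  classical
  obtain ⟨M, hM⟩ := exists_isMaxRainbowMatching G c
  suffices hk : k ≤ M.card by
    obtain ⟨N, hNM, hN⟩ := Finset.exists_subset_card_eq hk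
    exact ⟨N, hM.1.mono hNM, hN⟩
  have hsum : (∑ v, (colorDegree G c v : ℚ)) ≤ 2 * M.card * Fintype.card V := by
    exact_mod_cast hM.sum_colorDegree_le hC3
  rcases (Fintype.card V).eq_zero_or_pos with hn | hn
  · simp only [hn, Nat.cast_zero, div_zero] at havg
    exact_mod_cast (by linarith : (k : ℚ) ≤ M.card)
  · have hn' : (0 : ℚ) < Fintype.card V := by exact_mod_cast hn
    rw [le_div_iff₀ hn'] at havg
    have : (k : ℚ) * Fintype.card V ≤ M.card * Fintype.card V := by linarith
    exact_mod_cast le_of_mul_le_mul_right this hn'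

/-- Kritschgau: every triangle-free edge-colored graph with average color degree at
least `2k` contains a rainbow matching of size `k`. -/
theorem rainbow_matching_triangle_free_avg_color_degree
    {V : Type*} [Fintype V] (k : ℕ) (hk : 1 ≤ k)
    (G : SimpleGraph V) (c : Sym2 V → ℕ)
    (hC3 : G.CliqueFree 3)
    (havg : (2 * (k : ℚ)) ≤ (∑ v, (colorDegree G c v : ℚ)) / (Fintype.card V : ℚ)) :
    ∃ M : Finset (Sym2 V), IsRainbowMatching G c M ∧ M.card = k :=
  rainbow_matching_triangle_free_avg_color_degree_general k G c hC3 havg
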